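/- Let n ≥ 3 and k ≥ 2 be integers, and let A = pdiag(a_1,…,a_n) be a pseudo-diagonal matrix with 0 ≤ a_1 ≤ … ≤ a_n. If there exists an index i with 2 ≤ i ≤ n−1 such that (k−1)·a_i > max((k−2)·a_n, k·a_1), then the matrix D = A^k (k-th max-plus power) does not satisfy the root condition; specifically, D_{11} + D_{in} < D_{i1} + D_{1n}. -/

import Mathlib

open Finset

/-- Max-plus matrix product: `(A ⊗ B) i j = max_k (A i k + B k j)`. -/
noncomputable def mpMul {n : ℕ} [NeZero n] (A B : Fin n → Fin n → ℝ) :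
    Fin n → Fin n → ℝ :=
  fun i j => univ.sup' univ_nonempty fun k => A i k + B k j

/-- `mpPow A k` is the `k`-th max-plus power of `A` (for `k ≥ 1`). -/
noncomputable def mpPow {n : ℕ} [NeZero n] (A : Fin n → Fin n → ℝ) (k : ℕ) :
    Fin n → Fin n → ℝ :=
  (mpMul A)^[k - 1] A

/-!
`(A^k)_{pq}` is the best weight of a walk of length `k` from `p` to `q` in which a loop at `t`
earns `a_t` and a jump earns `0`. As the `a_t` are nonnegative with maximum `a_N`, a best walk
either never moves, or jumps once, or makes two jumps to spend the remaining steps at `N`, so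
`(A^k)_{pp} = max (k a_p) ((k-2) a_N)` and `(A^k)_{pq} = max ((k-1) max(a_p, a_q)) ((k-2) a_N)`
for `p ≠ q`. With `N = n` this gives
`D₁₁ + D_{in} ≤ max (k a₁) ((k-2) a_n) + (k-1) a_n < (k-1) a_i + (k-1) a_n ≤ D_{i1} + D_{1n}`.
-/

variable {n : ℕ}

noncomputable def pdiagPowEntry (a : Fin n → ℝ) (N : Fin n) (k : ℕ) (p q : Fin n) : ℝ :=
  if p = q then max (k * a p) ((k - 2) * a N)
  else max ((k - 1) * max (a p) (a q)) ((k - 2) * a N)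

theorem pdiagPowEntry_succ {a : Fin n → ℝ} {N : Fin n} (hN : ∀ i, a i ≤ a N) {k : ℕ} (hk : 1 ≤ k) (p q : Fin n) :
    pdiagPowEntry a N (k + 1) p q =
      max (a p + pdiagPowEntry a N k p q) (max (k * a q) ((k - 1) * a N)) := by
  have hk' : (1 : ℝ) ≤ k := by exact_mod_cast hk
  have := hN q; have := hN p
  unfold pdiagPowEntry
  push_cast
  split_ifs with hpq
  · subst hpq
    simp only [max_def]; split_ifs <;> nlinarith
  · simp only [max_def]; split_ifs <;> nlinarith

variable [NeZero n]

theorem mpPow_one (A : Fin n → Fin n → ℝ) : mpPow A 1 = A := rfl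

theorem mpPow_succ (A : Fin n → Fin n → ℝ) {k : ℕ} (hk : 1 ≤ k) :
    mpPow A (k + 1) = mpMul A (mpPow A k) := by
  obtain ⟨m, rfl⟩ := Nat.exists_eq_add_of_le' hk
  exact Function.iterate_succ_apply' _ _ _

theorem mpMul_pdiag_apply {a : Fin n → ℝ} {A : Fin n → Fin n → ℝ}
    (hA : ∀ i j, A i j = if i = j then a i else 0) (B : Fin n → Fin n → ℝ) {p : Fin n}
    (hp : 0 ≤ a p) (q : Fin n) :
    mpMul A B p q = max (a p + B p q) (univ.sup' univ_nonempty fun t => B t q) := by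
  have hA_nonneg : ∀ t, 0 ≤ A p t := fun t => by rw [hA]; split_ifs <;> simp [hp]
  apply le_antisymm
  · refine sup'_le _ _ fun t _ => ?_
    rw [hA]
    split_ifs with hpt
    · subst hpt; exact le_max_left _ _
    · exact le_max_of_le_right (by rw [zero_add]; exact le_sup' (fun t => B t q) (mem_univ t))
  · refine max_le ?_ (sup'_le _ _ fun t _ => ?_)
    · have := le_sup' (fun t => A p t + B t q) (mem_univ p)
      rwa [hA, if_pos rfl] at this
    · exact (le_add_of_nonneg_left (hA_nonneg t)).trans
        (le_sup' (fun t => A p t + B t q) (mem_univ t))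

theorem sup'_pdiagPowEntry {a : Fin n → ℝ} {N : Fin n} (hN₀ : 0 ≤ a N)
    (hN : ∀ i, a i ≤ a N) {k : ℕ} (hk : 1 ≤ k) (q : Fin n) :
    univ.sup' univ_nonempty (fun t => pdiagPowEntry a N k t q) =
      max (k * a q) ((k - 1) * a N) := by
  have hk' : (1 : ℝ) ≤ k := by exact_mod_cast hk
  have := hN q
  apply le_antisymm
  · refine sup'_le _ _ fun t _ => ?_
    unfold pdiagPowEntry
    split_ifs with htq
    · subst htq; exact max_le (le_max_left _ _) (le_max_of_le_right (by nlinarith))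
    · exact max_le
        (le_max_of_le_right (mul_le_mul_of_nonneg_left (max_le (hN t) (hN q)) (by linarith)))
        (le_max_of_le_right (by nlinarith))
  · refine max_le ?_ ?_
    · refine le_trans ?_ (le_sup' _ (mem_univ q))
      simp [pdiagPowEntry]
    · refine le_trans ?_ (le_sup' _ (mem_univ N))
      unfold pdiagPowEntry
      split_ifs with hNq
      · subst hNq; exact le_max_of_le_left (by nlinarith)
      · exact le_max_of_le_left (mul_le_mul_of_nonneg_left (le_max_left _ _) (by linarith))

theorem mpPow_pdiag {a : Fin n → ℝ} {N : Fin n} (hpos : ∀ i, 0 ≤ a i) (hN : ∀ i, a i ≤ a N)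
    {A : Fin n → Fin n → ℝ} (hA : ∀ i j, A i j = if i = j then a i else 0)
    {k : ℕ} (hk : 1 ≤ k) : mpPow A k = pdiagPowEntry a N k := by
  induction k, hk using Nat.le_induction with
  | base =>
    ext p q
    have := hpos p; have := hpos N
    rw [mpPow_one, hA, pdiagPowEntry]
    split_ifs <;> simp <;> linarith
  | succ k hk ih =>
    ext p q
    rw [mpPow_succ A hk, mpMul_pdiag_apply hA _ (hpos p), ih, sup'_pdiagPowEntry (hpos N) hN hk,
      pdiagPowEntry_succ hN hk]

/-- Let `n ≥ 3`, `k ≥ 2`, `A = pdiag(a₁, …, aₙ)` with `0 ≤ a₁ ≤ … ≤ aₙ`.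
If there is an index `i` (0-based: `1 ≤ i ≤ n - 2`) with
`(k-1)·aᵢ > max ((k-2)·aₙ) (k·a₁)`, then `D = A^k` does not satisfy the root condition
`D i j + D t t ≥ D i t + D t j`; specifically `D₁₁ + D_{i n} < D_{i 1} + D_{1 n}`. -/
theorem mpPow_not_root_condition {n : ℕ} [NeZero n] (hn : 3 ≤ n)
    (k : ℕ) (hk : 2 ≤ k)
    (a : Fin n → ℝ) (hmono : Monotone a) (hpos : ∀ i, 0 ≤ a i)
    (A : Fin n → Fin n → ℝ)
    (hA : ∀ i j, A i j = if i = j then a i else 0)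
    (i : Fin n) (hi1 : 1 ≤ (i : ℕ)) (hi2 : (i : ℕ) ≤ n - 2)
    (hbig : max (((k : ℝ) - 2) * a ⟨n - 1, by omega⟩) ((k : ℝ) * a ⟨0, by omega⟩)
        < ((k : ℝ) - 1) * a i) :
    (¬ ∀ i' j' t' : Fin n,
        mpPow A k i' t' + mpPow A k t' j' ≤ mpPow A k i' j' + mpPow A k t' t') ∧
    mpPow A k ⟨0, by omega⟩ ⟨0, by omega⟩ + mpPow A k i ⟨n - 1, by omega⟩
      < mpPow A k i ⟨0, by omega⟩ + mpPow A k ⟨0, by omega⟩ ⟨n - 1, by omega⟩ := by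
  set i₀ : Fin n := ⟨0, by omega⟩
  set iₙ : Fin n := ⟨n - 1, by omega⟩
  have hmax : ∀ t, a t ≤ a iₙ := fun t => hmono (Fin.le_def.2 (show (t : ℕ) ≤ n - 1 by omega))
  have hD : mpPow A k = pdiagPowEntry a iₙ k := mpPow_pdiag hpos hmax hA (by omega)
  have hi₀ : i ≠ i₀ := Fin.ne_of_val_ne (show (i : ℕ) ≠ 0 by omega)
  have hiₙ : i ≠ iₙ := Fin.ne_of_val_ne (show (i : ℕ) ≠ n - 1 by omega)
  have h₀ₙ : i₀ ≠ iₙ := Fin.ne_of_val_ne (show 0 ≠ n - 1 by omega)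
  have hk₁ : (1 : ℝ) ≤ k := by exact_mod_cast (by omega : 1 ≤ k)
  have hD₀₀ : mpPow A k i₀ i₀ < (k - 1) * a i := by
    simpa [hD, pdiagPowEntry, max_comm] using hbig
  have hDiₙ : mpPow A k i iₙ ≤ (k - 1) * a iₙ := by
    simp only [hD, pdiagPowEntry, if_neg hiₙ, max_eq_right (hmax i)]
    exact max_le le_rfl (by nlinarith [hpos iₙ])
  have hDi₀ : (k - 1) * a i ≤ mpPow A k i i₀ := by
    simp only [hD, pdiagPowEntry, if_neg hi₀]
    exact le_max_of_le_left (mul_le_mul_of_nonneg_left (le_max_left _ _) (by linarith))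
  have hD₀ₙ : (k - 1) * a iₙ ≤ mpPow A k i₀ iₙ := by
    simp only [hD, pdiagPowEntry, if_neg h₀ₙ]
    exact le_max_of_le_left (mul_le_mul_of_nonneg_left (le_max_right _ _) (by linarith))
  have hstrict : mpPow A k i₀ i₀ + mpPow A k i iₙ < mpPow A k i i₀ + mpPow A k i₀ iₙ := by
    linarith
  exact ⟨fun h => (h i iₙ i₀).not_gt (by linarith), hstrict⟩
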